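/- Let $M_c(s) = f_0 + g^T s + \tfrac12 s^T H s + \tfrac{\beta}{6}\|s\|^3 + \tfrac{\sigma_c}{4}\|s\|^4$ with $\sigma_c > 0$ and let $s_c$ satisfy $(H + \tfrac{\beta}{2}\|s_c\| I + \sigma_c\|s_c\|^2 I)s_c = -g$ and $H + \tfrac{\beta}{2}\|s_c\| I + \sigma_c\|s_c\|^2 I \succeq 0$. Then $M_c(0) - M_c(s_c) \ge \tfrac{\beta}{12}\|s_c\|^3 + \tfrac{\sigma_c}{4}\|s_c\|^4$. -/

import Mathlib

open Matrix

noncomputable def euclNorm {n : ℕ} (v : Fin n → ℝ) : ℝ := Real.sqrt (v ⬝ᵥ v)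

noncomputable def Mc {n : ℕ} (f0 : ℝ) (g : Fin n → ℝ) (H : Matrix (Fin n) (Fin n) ℝ)
    (β σc : ℝ) (s : Fin n → ℝ) : ℝ :=
  f0 + g ⬝ᵥ s + (1 / 2) * (s ⬝ᵥ H.mulVec s) + (β / 6) * (euclNorm s) ^ 3
    + (σc / 4) * (euclNorm s) ^ 4

/-!
Write `A = H + (β/2 ‖s‖ + σc ‖s‖²) I` and `r = ‖s_c‖`. Pairing the stationarity equation
`A s_c = -g` with `s_c` gives `gᵀ s_c = -s_cᵀ A s_c`, which turns the decrease of the model into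
the identity `M_c(0) - M_c(s_c) = ½ s_cᵀ A s_c + β/12 r³ + σc/4 r⁴`; the first term is
nonnegative because `A ⪰ 0`.
-/

noncomputable def shiftedHessian {n : ℕ} (H : Matrix (Fin n) (Fin n) ℝ) (β σc r : ℝ) :
    Matrix (Fin n) (Fin n) ℝ :=
  H + ((β / 2) * r) • (1 : Matrix (Fin n) (Fin n) ℝ)
    + (σc * r ^ 2) • (1 : Matrix (Fin n) (Fin n) ℝ)

lemma euclNorm_sq {n : ℕ} (v : Fin n → ℝ) : euclNorm v ^ 2 = v ⬝ᵥ v :=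
  Real.sq_sqrt (dotProduct_self_star_nonneg v)

@[simp]
lemma euclNorm_zero {n : ℕ} : euclNorm (0 : Fin n → ℝ) = 0 := by
  simp [euclNorm]

lemma dotProduct_shiftedHessian_mulVec {n : ℕ} (H : Matrix (Fin n) (Fin n) ℝ) (β σc r : ℝ)
    (w : Fin n → ℝ) :
    w ⬝ᵥ (shiftedHessian H β σc r) *ᵥ w
      = w ⬝ᵥ H *ᵥ w + ((β / 2) * r + σc * r ^ 2) * (w ⬝ᵥ w) := by
  simp only [shiftedHessian, add_mulVec, smul_mulVec, one_mulVec, dotProduct_add,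
    dotProduct_smul, smul_eq_mul]
  ring

lemma Mc_zero_sub_Mc_of_stationary {n : ℕ} (f0 : ℝ) (g : Fin n → ℝ)
    (H : Matrix (Fin n) (Fin n) ℝ) (β σc : ℝ) (s : Fin n → ℝ)
    (hstat : (shiftedHessian H β σc (euclNorm s)) *ᵥ s = -g) :
    Mc f0 g H β σc 0 - Mc f0 g H β σc s
      = (1 / 2) * (s ⬝ᵥ (shiftedHessian H β σc (euclNorm s)) *ᵥ s)
        + (β / 12) * euclNorm s ^ 3 + (σc / 4) * euclNorm s ^ 4 := by
  have hgs : g ⬝ᵥ s = -(s ⬝ᵥ (shiftedHessian H β σc (euclNorm s)) *ᵥ s) := by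
    rw [hstat, dotProduct_neg, dotProduct_comm, neg_neg]
  rw [dotProduct_shiftedHessian_mulVec] at hgs ⊢
  simp only [Mc, euclNorm_zero, dotProduct_zero, mulVec_zero, hgs, ← euclNorm_sq]
  ring

theorem stmt_11_general {n : ℕ} (f0 : ℝ) (g : Fin n → ℝ) (H : Matrix (Fin n) (Fin n) ℝ)
    (β σc : ℝ)
    (sc : Fin n → ℝ)
    (hstat : (H + ((β / 2) * euclNorm sc) • (1 : Matrix (Fin n) (Fin n) ℝ)
        + (σc * (euclNorm sc) ^ 2) • (1 : Matrix (Fin n) (Fin n) ℝ)).mulVec sc = -g)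
    (hpsd : ∀ w : Fin n → ℝ,
      0 ≤ w ⬝ᵥ (H + ((β / 2) * euclNorm sc) • (1 : Matrix (Fin n) (Fin n) ℝ)
        + (σc * (euclNorm sc) ^ 2) • (1 : Matrix (Fin n) (Fin n) ℝ)).mulVec w) :
    (β / 12) * (euclNorm sc) ^ 3 + (σc / 4) * (euclNorm sc) ^ 4
      ≤ Mc f0 g H β σc 0 - Mc f0 g H β σc sc := by
  rw [Mc_zero_sub_Mc_of_stationary f0 g H β σc sc hstat]
  have hA : 0 ≤ sc ⬝ᵥ shiftedHessian H β σc (euclNorm sc) *ᵥ sc := hpsd sc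
  linarith

theorem stmt_11 {n : ℕ} (f0 : ℝ) (g : Fin n → ℝ) (H : Matrix (Fin n) (Fin n) ℝ)
    (β σc : ℝ) (hH : H.IsSymm) (hσ : 0 < σc)
    (sc : Fin n → ℝ)
    (hstat : (H + ((β / 2) * euclNorm sc) • (1 : Matrix (Fin n) (Fin n) ℝ)
        + (σc * (euclNorm sc) ^ 2) • (1 : Matrix (Fin n) (Fin n) ℝ)).mulVec sc = -g)
    (hpsd : ∀ w : Fin n → ℝ,
      0 ≤ w ⬝ᵥ (H + ((β / 2) * euclNorm sc) • (1 : Matrix (Fin n) (Fin n) ℝ)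
        + (σc * (euclNorm sc) ^ 2) • (1 : Matrix (Fin n) (Fin n) ℝ)).mulVec w) :
    (β / 12) * (euclNorm sc) ^ 3 + (σc / 4) * (euclNorm sc) ^ 4
      ≤ Mc f0 g H β σc 0 - Mc f0 g H β σc sc :=
  stmt_11_general f0 g H β σc sc hstat hpsd
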